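/- arXiv:2309.12900 — 5 statements merged into one kernel-verified Lean document; each statement's English description precedes it below -/
import Mathlib

section
/- There exists a constant C depending only on d with the following property. For every p ∈ ℝ^d, μ(□_m, p) ≤ 3^{−d(m−n)} · Σ_{z ∈ 3^n ℤ^d ∩ □_m} μ(□_n(z), p) + C · P² · |p|² · 3^{−(n−l)}. -/
attribute [local instance] Classical.propDecidable

noncomputable section

/-- The triadic cube of size `3^k` centered at `z`. -/
def triCube (d k : ℕ) (z : EuclideanSpace ℝ (Fin d)) : Set (EuclideanSpace ℝ (Fin d)) :=
  {x | ∀ i, z i - 3 ^ k / 2 ≤ x i ∧ x i < z i + 3 ^ k / 2}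

/-- `z` is a point of the lattice `3^l ℤ^d`. -/
def isLatticePt (d l : ℕ) (z : EuclideanSpace ℝ (Fin d)) : Prop :=
  ∀ i, ∃ a : ℤ, z i = 3 ^ l * a

/-- The thickened boundary `∂_*^{(l)} Q` of the cube `Q = □_k(z)`: the union of the
subcubes `□_l(z')`, `z' ∈ 3^l ℤ^d ∩ Q`, whose closure meets the topological boundary
of `Q`. -/
def thickBdry (d l k : ℕ) (z : EuclideanSpace ℝ (Fin d)) : Set (EuclideanSpace ℝ (Fin d)) :=
  ⋃ z' ∈ {z' : EuclideanSpace ℝ (Fin d) | isLatticePt d l z' ∧ z' ∈ triCube d k z ∧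
      (closure (triCube d l z') ∩ frontier (triCube d k z)).Nonempty},
    triCube d l z'

/-- The set of Dirichlet energies of admissible functions (equal to `ℓ_p` on the
thickened boundary) on the cube `□_k(z)`. -/
def cubeEnergies (d : ℕ) (W : Finset (EuclideanSpace ℝ (Fin d))) (l k : ℕ)
    (z : EuclideanSpace ℝ (Fin d)) (p : EuclideanSpace ℝ (Fin d)) : Set ℝ :=
  {E | ∃ u : EuclideanSpace ℝ (Fin d) → ℝ,
    (∀ x ∈ W, x ∈ thickBdry d l k z → u x = ∑ i, p i * x i) ∧
    E = ∑ x ∈ W.filter (· ∈ triCube d k z),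
          ∑ y ∈ (W.filter (· ∈ triCube d k z)).filter (fun y => y ≠ x ∧ dist x y ≤ 1),
            (1/2) * (u x - u y)^2}

/-- The Dirichlet subadditive quantity `μ(□_k(z), p)`. -/
def muCG (d : ℕ) (W : Finset (EuclideanSpace ℝ (Fin d))) (l k : ℕ)
    (z : EuclideanSpace ℝ (Fin d)) (p : EuclideanSpace ℝ (Fin d)) : ℝ :=
  ((3 : ℝ) ^ (d * k))⁻¹ * sInf (cubeEnergies d W l k z p)


/-!
Glue near-minimisers `u_z` of the subcube problems into `U x := u_{z(x)} x`, where `□_n(z(x))`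
is the subcube containing `x`. Since the triadic grid of level `l` refines that of level `n`, a
point of `∂_*^{(l)} □_m` lies in `∂_*^{(l)}` of its own subcube, so `U` is admissible for `□_m`.
Edges inside one subcube contribute exactly the subcube energies. An edge `x ~ y` between two
subcubes has both endpoints within distance `1 ≤ 3^l` of a face of their subcubes, hence in their
thickened boundaries, where `U` is the affine function `x ↦ p·x`: it contributes at most
`|p|²/2`. Every point has at most `2^d P` neighbours, and at most `2d · 3^{dm-n} P` points lie
within distance `1` of a subcube face, so after division by `|□_m| = 3^{dm}` the error is
`d 2^d P² |p|² 3^{-n}`.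
-/

namespace Subadditivity

open Finset

lemma le_sum_sInf {ι : Type*} (I : Finset ι) {S : ι → Set ℝ} (hS : ∀ a, (S a).Nonempty) {x : ℝ}
    (h : ∀ e : ι → ℝ, (∀ a, e a ∈ S a) → x ≤ ∑ a ∈ I, e a) : x ≤ ∑ a ∈ I, sInf (S a) := by
  refine le_of_forall_pos_lt_add fun δ hδ => ?_
  have hε : 0 < δ / (#I + 1) := by positivity
  choose e he hlt using fun a => Real.lt_sInf_add_pos (hS a) hε
  have hsmall : (#I : ℝ) * (δ / (#I + 1)) < δ := by
    rw [mul_div_assoc', div_lt_iff₀ (by positivity)]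
    linarith
  calc x ≤ ∑ a ∈ I, e a := h e he
    _ ≤ ∑ a ∈ I, (sInf (S a) + δ / (#I + 1)) := sum_le_sum fun a _ => (hlt a).le
    _ = ∑ a ∈ I, sInf (S a) + #I * (δ / (#I + 1)) := by
        rw [sum_add_distrib, sum_const, nsmul_eq_mul]
    _ < ∑ a ∈ I, sInf (S a) + δ := by linarith

section Energy

variable {α ι : Type*} [PseudoMetricSpace α] [DecidableEq α] [DecidableEq ι]

def dirichletEnergy (S : Finset α) (u : α → ℝ) : ℝ :=
  ∑ x ∈ S, ∑ y ∈ S.filter (fun y => y ≠ x ∧ dist x y ≤ 1), (1/2) * (u x - u y)^2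

lemma dirichletEnergy_nonneg (S : Finset α) (u : α → ℝ) : 0 ≤ dirichletEnergy S u :=
  sum_nonneg fun _ _ => sum_nonneg fun _ _ => by positivity

lemma dirichletEnergy_glue (S : Finset α) {I : Finset ι} {A : α → ι} (hA : ∀ x ∈ S, A x ∈ I)
    {F : ι → Finset α} (hF : ∀ a ∈ I, F a = S.filter (A · = a)) (u : ι → α → ℝ) :
    dirichletEnergy S (fun x => u (A x) x) =
      ∑ a ∈ I, dirichletEnergy (F a) (u a) +
        ∑ x ∈ S, ∑ y ∈ (S.filter (fun y => y ≠ x ∧ dist x y ≤ 1)).filter (A · ≠ A x),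
          (1/2) * (u (A x) x - u (A y) y)^2 := by
  rw [sum_congr rfl fun a ha => congrArg (dirichletEnergy · (u a)) (hF a ha)]
  simp only [dirichletEnergy]
  rw [sum_congr rfl fun x _ => (sum_filter_add_sum_filter_not _ (A · = A x) _).symm,
    sum_add_distrib, ← sum_fiberwise_of_maps_to hA]
  congr 1
  refine sum_congr rfl fun a _ => sum_congr rfl fun x hx => ?_
  have hax := (mem_filter.mp hx).2
  rw [filter_filter, filter_filter]
  refine sum_congr (filter_congr fun y _ => ?_) fun y hy => ?_
  · rw [hax]
    exact and_comm
  · rw [hax, (mem_filter.mp hy).2.1]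

lemma sum_crossing_le (S : Finset α) (A : α → ι) (f : α → α → ℝ) (B : α → Prop)
    [DecidablePred B] {c N : ℝ} (hc : 0 ≤ c)
    (hB : ∀ x ∈ S, ∀ y ∈ S, dist x y ≤ 1 → A x ≠ A y → B x)
    (hf : ∀ x ∈ S, ∀ y ∈ S, dist x y ≤ 1 → A x ≠ A y → f x y ≤ c)
    (hN : ∀ x ∈ S, (#(S.filter (dist x · ≤ 1)) : ℝ) ≤ N) :
    ∑ x ∈ S, ∑ y ∈ (S.filter (fun y => y ≠ x ∧ dist x y ≤ 1)).filter (A · ≠ A x), f x y ≤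
      #(S.filter B) * (N * c) := by
  rw [card_eq_sum_ones, Nat.cast_sum, sum_mul, sum_filter]
  simp only [Nat.cast_one, one_mul]
  refine sum_le_sum fun x hx => ?_
  split_ifs with hBx
  · calc _ ≤ ∑ _y ∈ (S.filter (fun y => y ≠ x ∧ dist x y ≤ 1)).filter (A · ≠ A x), c :=
          sum_le_sum fun y hy => by
            simp only [mem_filter] at hy
            exact hf x hx y hy.1.1 hy.1.2.2 (Ne.symm hy.2)
      _ ≤ #(S.filter (dist x · ≤ 1)) * c := by
          rw [sum_const, nsmul_eq_mul]
          refine mul_le_mul_of_nonneg_right (Nat.cast_le.mpr (card_le_card fun y hy => ?_)) hc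
          simp only [mem_filter] at hy ⊢
          exact ⟨hy.1.1, hy.1.2.2⟩
      _ ≤ N * c := mul_le_mul_of_nonneg_right (hN x hx) hc
  · refine (sum_eq_zero fun y hy => ?_).le
    simp only [mem_filter] at hy
    exact absurd (hB x hx y hy.1.1 hy.1.2.2 (Ne.symm hy.2)) hBx

end Energy

/-- The index `a` of the triadic interval `[3^k a - 3^k/2, 3^k a + 3^k/2)` containing `t`. -/
def cellIndex (k : ℕ) (t : ℝ) : ℤ := ⌊t / 3 ^ k + 1 / 2⌋

def cellLo (k : ℕ) (t : ℝ) : ℝ := 3 ^ k * cellIndex k t - 3 ^ k / 2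

def cellHi (k : ℕ) (t : ℝ) : ℝ := 3 ^ k * cellIndex k t + 3 ^ k / 2

/-- An interval of level `k + r` is made of `2 * halfWidth r + 1` intervals of level `k`. -/
def halfWidth (r : ℕ) : ℤ := ((3 : ℤ) ^ r - 1) / 2

lemma two_mul_halfWidth_add_one (r : ℕ) : 2 * halfWidth r + 1 = 3 ^ r := by
  have : Even ((3 : ℤ) ^ r - 1) := (Odd.pow (by decide)).sub_odd odd_one
  rw [halfWidth, Int.two_mul_ediv_two_of_even this, sub_add_cancel]

lemma card_Icc_halfWidth (r : ℕ) : #(Icc (-halfWidth r) (halfWidth r)) = 3 ^ r := by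
  rw [Int.card_Icc, show halfWidth r + 1 - -halfWidth r = 2 * halfWidth r + 1 by ring,
    two_mul_halfWidth_add_one]
  norm_cast

lemma three_pow_eq_mul {l n : ℕ} (hln : l ≤ n) :
    (3 : ℝ) ^ n = 3 ^ l * (2 * halfWidth (n - l) + 1) := by
  have : (2 * halfWidth (n - l) + 1 : ℝ) = 3 ^ (n - l) := by
    exact_mod_cast two_mul_halfWidth_add_one (n - l)
  rw [this, ← pow_add, Nat.add_sub_cancel' hln]

lemma cellIndex_eq_iff {k : ℕ} {a : ℤ} {t : ℝ} :
    cellIndex k t = a ↔ 3 ^ k * a - 3 ^ k / 2 ≤ t ∧ t < 3 ^ k * a + 3 ^ k / 2 := by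
  have hk : (0 : ℝ) < 3 ^ k := by positivity
  rw [cellIndex, Int.floor_eq_iff, ← sub_le_iff_le_add, le_div_iff₀ hk, ← lt_sub_iff_add_lt,
    div_lt_iff₀ hk]
  constructor <;> rintro ⟨h₁, h₂⟩ <;> constructor <;> linarith

lemma cellLo_le (k : ℕ) (t : ℝ) : cellLo k t ≤ t := (cellIndex_eq_iff.mp rfl).1

lemma lt_cellHi (k : ℕ) (t : ℝ) : t < cellHi k t := (cellIndex_eq_iff.mp rfl).2

section Nesting

variable {l n : ℕ}

lemma cellIndex_mem_Icc (hln : l ≤ n) (t : ℝ) :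
    cellIndex l t ∈ Set.Icc ((2 * halfWidth (n - l) + 1) * cellIndex n t - halfWidth (n - l))
      ((2 * halfWidth (n - l) + 1) * cellIndex n t + halfWidth (n - l)) := by
  set h := halfWidth (n - l)
  set a := cellIndex n t
  set b := cellIndex l t
  have hl : (0 : ℝ) < 3 ^ l := by positivity
  have hn := three_pow_eq_mul hln
  have upper : (b : ℝ) - 1 / 2 < (2 * h + 1) * a + h + 1 / 2 := by
    refine lt_of_mul_lt_mul_left ?_ hl.le
    calc 3 ^ l * ((b : ℝ) - 1 / 2) = cellLo l t := by rw [cellLo]; ring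
      _ ≤ t := cellLo_le l t
      _ < cellHi n t := lt_cellHi n t
      _ = 3 ^ l * ((2 * h + 1) * a + h + 1 / 2) := by rw [cellHi, hn]; ring
  have lower : (2 * h + 1) * a - h - 1 / 2 < (b : ℝ) + 1 / 2 := by
    refine lt_of_mul_lt_mul_left ?_ hl.le
    calc 3 ^ l * ((2 * h + 1) * a - h - 1 / 2 : ℝ) = cellLo n t := by rw [cellLo, hn]; ring
      _ ≤ t := cellLo_le n t
      _ < cellHi l t := lt_cellHi l t
      _ = 3 ^ l * ((b : ℝ) + 1 / 2) := by rw [cellHi]; ring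
  have upper' : (b : ℝ) < ((2 * h + 1) * a + h + 1 : ℤ) := by push_cast; linarith
  have lower' : (((2 * h + 1) * a - h - 1 : ℤ) : ℝ) < b := by push_cast; linarith
  exact ⟨by linarith [Int.cast_lt.mp lower'], by linarith [Int.cast_lt.mp upper']⟩

lemma cellLo_le_cellLo (hln : l ≤ n) (t : ℝ) : cellLo n t ≤ cellLo l t := by
  have hb : ((2 * halfWidth (n - l) + 1) * cellIndex n t - halfWidth (n - l) : ℝ) ≤
      cellIndex l t := by exact_mod_cast (cellIndex_mem_Icc hln t).1
  have := mul_le_mul_of_nonneg_left hb (by positivity : (0 : ℝ) ≤ 3 ^ l)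
  rw [cellLo, cellLo, three_pow_eq_mul hln]
  nlinarith

lemma cellHi_le_cellHi (hln : l ≤ n) (t : ℝ) : cellHi l t ≤ cellHi n t := by
  have hb : (cellIndex l t : ℝ) ≤
      (2 * halfWidth (n - l) + 1) * cellIndex n t + halfWidth (n - l) := by
    exact_mod_cast (cellIndex_mem_Icc hln t).2
  have := mul_le_mul_of_nonneg_left hb (by positivity : (0 : ℝ) ≤ 3 ^ l)
  rw [cellHi, cellHi, three_pow_eq_mul hln]
  nlinarith

/-- Had the level-`l` interval ended before `cellHi n t`, it would end at least `3^l ≥ 1`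
before it. -/
lemma cellHi_eq_of_le (hln : l ≤ n) {t : ℝ} (ht : cellHi n t - 1 ≤ t) :
    cellHi l t = cellHi n t := by
  set h := halfWidth (n - l)
  have top : cellIndex l t = (2 * h + 1) * cellIndex n t + h := by
    refine le_antisymm (cellIndex_mem_Icc hln t).2 ?_
    by_contra! hlt
    have hb : (cellIndex l t : ℝ) ≤ (2 * h + 1) * cellIndex n t + h - 1 := by
      exact_mod_cast Int.le_sub_one_of_lt hlt
    have := mul_le_mul_of_nonneg_left hb (by positivity : (0 : ℝ) ≤ 3 ^ l)
    have hl : (1 : ℝ) ≤ 3 ^ l := one_le_pow₀ (by norm_num)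
    have := lt_cellHi l t
    rw [cellHi, three_pow_eq_mul hln] at ht
    rw [cellHi] at this
    nlinarith
  rw [cellHi, cellHi, top, three_pow_eq_mul hln]
  push_cast
  ring

lemma cellLo_eq_of_lt (hln : l ≤ n) {t : ℝ} (ht : t < cellLo n t + 1) :
    cellLo l t = cellLo n t := by
  set h := halfWidth (n - l)
  have bot : cellIndex l t = (2 * h + 1) * cellIndex n t - h := by
    refine le_antisymm ?_ (cellIndex_mem_Icc hln t).1
    by_contra! hlt
    have hb : ((2 * h + 1) * cellIndex n t - h + 1 : ℝ) ≤ cellIndex l t := by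
      exact_mod_cast Int.add_one_le_of_lt hlt
    have := mul_le_mul_of_nonneg_left hb (by positivity : (0 : ℝ) ≤ 3 ^ l)
    have hl : (1 : ℝ) ≤ 3 ^ l := one_le_pow₀ (by norm_num)
    have := cellLo_le l t
    rw [cellLo, three_pow_eq_mul hln] at ht
    rw [cellLo] at this
    nlinarith
  rw [cellLo, cellLo, bot, three_pow_eq_mul hln]
  push_cast
  ring

end Nesting

lemma cellIndex_mem_Icc_halfWidth {k m : ℕ} (hkm : k ≤ m) {t : ℝ} (h₁ : -(3 ^ m / 2) ≤ t)
    (h₂ : t < 3 ^ m / 2) : cellIndex k t ∈ Icc (-halfWidth (m - k)) (halfWidth (m - k)) := by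
  have h0 : cellIndex m t = 0 := cellIndex_eq_iff.mpr (by simpa using ⟨h₁, h₂⟩)
  simpa [h0] using cellIndex_mem_Icc hkm t

def subcubeIndices (d r : ℕ) : Finset (Fin d → ℤ) :=
  Fintype.piFinset fun _ => Icc (-halfWidth r) (halfWidth r)

def SharesFace (l n : ℕ) (t : ℝ) : Prop := cellLo l t = cellLo n t ∨ cellHi l t = cellHi n t

lemma SharesFace.mono {l n m : ℕ} {t : ℝ} (hln : l ≤ n) (hnm : n ≤ m) (h : SharesFace l m t) :
    SharesFace l n t := by
  have := cellLo_le_cellLo hln t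
  have := cellLo_le_cellLo hnm t
  have := cellHi_le_cellHi hln t
  have := cellHi_le_cellHi hnm t
  rcases h with h | h
  · left; linarith
  · right; linarith

def IsNearFace (n : ℕ) (t : ℝ) : Prop := cellHi n t - 1 ≤ t ∨ t < cellLo n t + 1

lemma IsNearFace.sharesFace {l n : ℕ} {t : ℝ} (hln : l ≤ n) (h : IsNearFace n t) :
    SharesFace l n t :=
  h.elim (fun h => .inr (cellHi_eq_of_le hln h)) (fun h => .inl (cellLo_eq_of_lt hln h))

lemma isNearFace_of_cellIndex_ne {n : ℕ} {s t : ℝ} (hst : |s - t| ≤ 1)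
    (hne : cellIndex n s ≠ cellIndex n t) : IsNearFace n s := by
  have := abs_le.mp hst
  rw [IsNearFace]
  by_contra! h
  refine hne (cellIndex_eq_iff.mpr ?_).symm
  simp only [cellLo, cellHi] at h
  constructor <;> linarith

section Cubes

variable {d l n m : ℕ}

lemma triCube_eq_preimage (k : ℕ) (z : EuclideanSpace ℝ (Fin d)) :
    triCube d k z = (EuclideanSpace.equiv (Fin d) ℝ).toHomeomorph ⁻¹'
      Set.univ.pi (fun i => Set.Ico (z i - 3 ^ k / 2) (z i + 3 ^ k / 2)) := by
  ext x
  simp [triCube]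

lemma closure_triCube (k : ℕ) (z : EuclideanSpace ℝ (Fin d)) :
    closure (triCube d k z) = {x | ∀ i, x i ∈ Set.Icc (z i - 3 ^ k / 2) (z i + 3 ^ k / 2)} := by
  have hne (i : Fin d) : z i - 3 ^ k / 2 ≠ z i + 3 ^ k / 2 := by
    have : (0 : ℝ) < 3 ^ k := by positivity
    linarith
  rw [triCube_eq_preimage, ← Homeomorph.preimage_closure]
  ext x
  simp only [closure_pi_set, closure_Ico (hne _), Set.mem_preimage, Set.mem_univ_pi]
  rfl

lemma interior_triCube (k : ℕ) (z : EuclideanSpace ℝ (Fin d)) :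
    interior (triCube d k z) = {x | ∀ i, x i ∈ Set.Ioo (z i - 3 ^ k / 2) (z i + 3 ^ k / 2)} := by
  rw [triCube_eq_preimage, ← Homeomorph.preimage_interior]
  ext x
  simp only [interior_pi_set Set.finite_univ, interior_Ico, Set.mem_preimage, Set.mem_univ_pi]
  rfl

lemma closure_inter_frontier_triCube_nonempty_iff {k k' : ℕ} {z z' : EuclideanSpace ℝ (Fin d)}
    (hsub : ∀ j, z j - 3 ^ k / 2 ≤ z' j - 3 ^ k' / 2 ∧ z' j + 3 ^ k' / 2 ≤ z j + 3 ^ k / 2) :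
    (closure (triCube d k' z') ∩ frontier (triCube d k z)).Nonempty ↔
      ∃ i, z' i - 3 ^ k' / 2 = z i - 3 ^ k / 2 ∨ z' i + 3 ^ k' / 2 = z i + 3 ^ k / 2 := by
  have hk' : (0 : ℝ) < 3 ^ k' := by positivity
  rw [frontier, closure_triCube, closure_triCube, interior_triCube]
  constructor
  · rintro ⟨q, hq', -, hq⟩
    simp only [Set.mem_ofPred_eq, Set.mem_Icc, Set.mem_Ioo, not_forall, not_and, not_lt] at hq' hq
    obtain ⟨i, hi⟩ := hq
    refine ⟨i, ?_⟩
    have := hsub i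
    have := hq' i
    by_cases hlo : z i - 3 ^ k / 2 < q i
    · right; linarith [hi hlo]
    · left; linarith
  · rintro ⟨i, hlo | hhi⟩
    · refine ⟨WithLp.toLp 2 (fun j => z' j - 3 ^ k' / 2), fun j => ?_, fun j => ?_, ?_⟩
      · constructor <;> simp only <;> linarith
      · have := hsub j; constructor <;> simp only <;> linarith
      · simp only [Set.mem_ofPred_eq, Set.mem_Ioo, not_forall]
        exact ⟨i, fun h => h.1.ne hlo.symm⟩
    · refine ⟨WithLp.toLp 2 (fun j => z' j + 3 ^ k' / 2), fun j => ?_, fun j => ?_, ?_⟩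
      · constructor <;> simp only <;> linarith
      · have := hsub j; constructor <;> simp only <;> linarith
      · simp only [Set.mem_ofPred_eq, Set.mem_Ioo, not_forall]
        exact ⟨i, fun h => h.2.ne hhi⟩

def cubeCenter (k : ℕ) (a : Fin d → ℤ) : EuclideanSpace ℝ (Fin d) :=
  WithLp.toLp 2 (fun i => (3 : ℝ) ^ k * (a i : ℝ))

def cubeIndex (k : ℕ) (x : EuclideanSpace ℝ (Fin d)) : Fin d → ℤ := fun i => cellIndex k (x i)

lemma cubeCenter_zero (k : ℕ) : cubeCenter k (0 : Fin d → ℤ) = 0 := by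
  ext; simp [cubeCenter]

lemma mem_triCube_cubeCenter_iff {k : ℕ} {a : Fin d → ℤ} {x : EuclideanSpace ℝ (Fin d)} :
    x ∈ triCube d k (cubeCenter k a) ↔ cubeIndex k x = a := by
  simp only [funext_iff, cubeIndex, cellIndex_eq_iff]
  rfl

lemma eq_cubeCenter_of_mem_triCube {k : ℕ} {z x : EuclideanSpace ℝ (Fin d)}
    (hz : isLatticePt d k z) (hx : x ∈ triCube d k z) : z = cubeCenter k (cubeIndex k x) := by
  choose a ha using hz
  obtain rfl : z = cubeCenter k a := PiLp.ext ha
  rw [mem_triCube_cubeCenter_iff.mp hx]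

lemma abs_sub_apply_le_dist (x y : EuclideanSpace ℝ (Fin d)) (i : Fin d) :
    |x i - y i| ≤ dist x y := by
  simpa [dist_eq_norm] using PiLp.norm_apply_le (x - y) i

lemma exists_isNearFace_of_cubeIndex_ne {x y : EuclideanSpace ℝ (Fin d)}
    (hxy : dist x y ≤ 1) (hne : cubeIndex n x ≠ cubeIndex n y) : ∃ i, IsNearFace n (x i) := by
  obtain ⟨i, hi⟩ := Function.ne_iff.mp hne
  exact ⟨i, isNearFace_of_cellIndex_ne ((abs_sub_apply_le_dist x y i).trans hxy) hi⟩

lemma mem_thickBdry_iff (hln : l ≤ n) (x : EuclideanSpace ℝ (Fin d)) :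
    x ∈ thickBdry d l n (cubeCenter n (cubeIndex n x)) ↔ ∃ i, SharesFace l n (x i) := by
  have hsub (j : Fin d) : cellLo n (x j) ≤ cellLo l (x j) ∧ cellHi l (x j) ≤ cellHi n (x j) :=
    ⟨cellLo_le_cellLo hln (x j), cellHi_le_cellHi hln (x j)⟩
  simp only [thickBdry, Set.mem_iUnion, Set.mem_ofPred_eq, exists_prop]
  constructor
  · rintro ⟨z', ⟨hz', -, hface⟩, hx⟩
    obtain rfl := eq_cubeCenter_of_mem_triCube hz' hx
    exact (closure_inter_frontier_triCube_nonempty_iff hsub).mp hface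
  · intro hface
    refine ⟨cubeCenter l (cubeIndex l x), ⟨fun i => ⟨_, rfl⟩, fun j => ?_,
      (closure_inter_frontier_triCube_nonempty_iff hsub).mpr hface⟩,
      mem_triCube_cubeCenter_iff.mpr rfl⟩
    have hl : (0 : ℝ) < 3 ^ l := by positivity
    have := hsub j
    simp only [cellLo, cellHi] at this
    constructor <;> simp only [cubeCenter, cubeIndex] <;> linarith

lemma mem_thickBdry_of_isNearFace (hln : l ≤ n) {x : EuclideanSpace ℝ (Fin d)}
    (h : ∃ i, IsNearFace n (x i)) : x ∈ thickBdry d l n (cubeCenter n (cubeIndex n x)) :=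
  (mem_thickBdry_iff hln x).mpr (h.imp fun _ hi => hi.sharesFace hln)

lemma mem_thickBdry_of_mem_thickBdry_zero (hln : l ≤ n) (hnm : n ≤ m)
    {x : EuclideanSpace ℝ (Fin d)} (hx : x ∈ triCube d m 0) (hb : x ∈ thickBdry d l m 0) :
    x ∈ thickBdry d l n (cubeCenter n (cubeIndex n x)) := by
  rw [← cubeCenter_zero m] at hx hb
  rw [← mem_triCube_cubeCenter_iff.mp hx, mem_thickBdry_iff (hln.trans hnm)] at hb
  exact (mem_thickBdry_iff hln x).mpr (hb.imp fun _ hi => hi.mono hln hnm)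

lemma cubeIndex_mem_subcubeIndices (hnm : n ≤ m) {x : EuclideanSpace ℝ (Fin d)}
    (hx : x ∈ triCube d m 0) : cubeIndex n x ∈ subcubeIndices d (m - n) := by
  refine Fintype.mem_piFinset.mpr fun j => ?_
  have := hx j
  simp only [PiLp.zero_apply, zero_sub, zero_add] at this
  exact cellIndex_mem_Icc_halfWidth hnm this.1 this.2

lemma sq_sum_mul_sub_sum_mul_le (p x y : EuclideanSpace ℝ (Fin d)) (h : dist x y ≤ 1) :
    ((∑ i, p i * x i) - ∑ i, p i * y i) ^ 2 ≤ ‖p‖ ^ 2 := by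
  have hinner : (∑ i, p i * x i) - ∑ i, p i * y i = inner ℝ p (x - y) := by
    simp [PiLp.inner_apply, ← sum_sub_distrib, mul_sub, mul_comm]
  have hle : |inner ℝ p (x - y)| ≤ ‖p‖ :=
    (abs_real_inner_le_norm p (x - y)).trans
      (mul_le_of_le_one_right (norm_nonneg p) (by rwa [← dist_eq_norm]))
  rw [hinner, ← sq_abs]
  exact pow_le_pow_left₀ (abs_nonneg _) hle 2

lemma card_piFinset_Icc_halfWidth {k : Fin d → ℕ} (hk : ∀ j, k j ≤ m) :
    (#(Fintype.piFinset fun j => Icc (-halfWidth (m - k j)) (halfWidth (m - k j))) : ℝ) =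
      3 ^ (d * m) / 3 ^ (∑ j, k j) := by
  simp only [Fintype.card_piFinset, card_Icc_halfWidth]
  push_cast
  rw [prod_congr rfl fun j _ => pow_sub₀ (3 : ℝ) three_ne_zero (hk j), prod_mul_distrib,
    prod_inv_distrib, prod_const, prod_pow_eq_pow_sum, card_univ, Fintype.card_fin, ← pow_mul,
    mul_comm m d, div_eq_mul_inv]

def UnitCubeBounded (W : Finset (EuclideanSpace ℝ (Fin d))) (P : ℝ) : Prop :=
  ∀ z : EuclideanSpace ℝ (Fin d), (#(W.filter (fun x => ∀ i, z i ≤ x i ∧ x i ≤ z i + 1)) : ℝ) ≤ P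

section PointSet

variable {W : Finset (EuclideanSpace ℝ (Fin d))} {P : ℝ}

lemma card_le_card_mul_of_fibers_in_unitCube (hP : UnitCubeBounded W P) {β : Type*}
    [DecidableEq β] {s : Finset (EuclideanSpace ℝ (Fin d))} (hs : s ⊆ W)
    {f : EuclideanSpace ℝ (Fin d) → β} {t : Finset β} (hst : ∀ x ∈ s, f x ∈ t)
    (hfib : ∀ b ∈ t, ∃ z : EuclideanSpace ℝ (Fin d),
      ∀ x ∈ s, f x = b → ∀ i, z i ≤ x i ∧ x i ≤ z i + 1) :
    (#s : ℝ) ≤ #t * P := by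
  rw [card_eq_sum_card_fiberwise hst, Nat.cast_sum, ← nsmul_eq_mul, ← sum_const]
  refine sum_le_sum fun b hb => ?_
  obtain ⟨z, hz⟩ := hfib b hb
  refine le_trans (Nat.cast_le.mpr (card_le_card fun x hx => ?_)) (hP z)
  obtain ⟨hxs, hxb⟩ := mem_filter.mp hx
  exact mem_filter.mpr ⟨hs hxs, hz x hxs hxb⟩

lemma card_filter_dist_le (hP : UnitCubeBounded W P) (x : EuclideanSpace ℝ (Fin d)) :
    (#(W.filter (dist x · ≤ 1)) : ℝ) ≤ 2 ^ d * P := by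
  have hcard : (#(univ : Finset (Fin d → Bool)) : ℝ) = 2 ^ d := by simp
  rw [← hcard]
  refine card_le_card_mul_of_fibers_in_unitCube hP (filter_subset _ _)
    (f := fun y i => decide (x i ≤ y i)) (fun _ _ => mem_univ _) fun b _ => ?_
  refine ⟨WithLp.toLp 2 (fun i => if b i then x i else x i - 1), fun y hy hyb i => ?_⟩
  have := abs_le.mp ((abs_sub_apply_le_dist x y i).trans (mem_filter.mp hy).2)
  subst hyb
  simp only [decide_eq_true_eq]
  split_ifs <;> constructor <;> linarith

/-- Sorting the points near a face orthogonal to the `i`-th axis by the level-`n` index of their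
`i`-th coordinate, the side of the face, and the unit cell of their other coordinates puts them
into `2 · 3^{dm - n}` unit cubes. -/
lemma card_filter_isNearFace_le (hP : UnitCubeBounded W P) (hnm : n ≤ m)
    (hW : ∀ x ∈ W, x ∈ triCube d m 0) (i : Fin d) :
    (#(W.filter (fun x => IsNearFace n (x i))) : ℝ) ≤ 2 * (3 ^ (d * m) / 3 ^ n) * P := by
  set lvl : Fin d → ℕ := fun j => if j = i then n else 0
  have hlvl (j : Fin d) : lvl j ≤ m := by dsimp only [lvl]; split_ifs <;> omega
  set t := Fintype.piFinset (fun j => Icc (-halfWidth (m - lvl j)) (halfWidth (m - lvl j)))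
    ×ˢ (univ : Finset Bool)
  have hcard : (#t : ℝ) = 2 * (3 ^ (d * m) / 3 ^ n) := by
    rw [card_product, Nat.cast_mul, card_piFinset_Icc_halfWidth hlvl, card_univ,
      Fintype.card_bool, Nat.cast_ofNat, mul_comm]
    simp [lvl]
  rw [← hcard]
  refine card_le_card_mul_of_fibers_in_unitCube hP (filter_subset _ _)
    (f := fun x => (fun j => cellIndex (lvl j) (x j), decide (cellHi n (x i) - 1 ≤ x i)))
    (fun x hx => ?_) fun b _ => ?_
  · have hx := hW x (mem_filter.mp hx).1
    refine mem_product.mpr ⟨Fintype.mem_piFinset.mpr fun j => ?_, mem_univ _⟩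
    have := hx j
    simp only [PiLp.zero_apply, zero_sub, zero_add] at this
    exact cellIndex_mem_Icc_halfWidth (hlvl j) this.1 this.2
  · obtain ⟨c, s⟩ := b
    refine ⟨WithLp.toLp 2 fun j => if j = i then
      (if s then 3 ^ n * c j + 3 ^ n / 2 - 1 else 3 ^ n * c j - 3 ^ n / 2) else c j - 1 / 2,
      fun x hx hxb j => ?_⟩
    obtain ⟨rfl, rfl⟩ := Prod.mk.inj hxb
    have hlo := cellLo_le (lvl j) (x j)
    have hhi := lt_cellHi (lvl j) (x j)
    by_cases hj : j = i
    · subst hj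
      have hnear := (mem_filter.mp hx).2
      simp only [lvl, if_true, cellLo, cellHi, IsNearFace] at hlo hhi hnear ⊢
      split_ifs with h
      · constructor <;> linarith [of_decide_eq_true h]
      · constructor <;> linarith [hnear.resolve_left (mt decide_eq_true h)]
    · simp only [lvl, hj, if_false, cellLo, cellHi, pow_zero, one_mul] at hlo hhi ⊢
      constructor <;> linarith

lemma card_filter_exists_isNearFace_le (hP : UnitCubeBounded W P) (hnm : n ≤ m)
    (hW : ∀ x ∈ W, x ∈ triCube d m 0) :
    (#(W.filter (fun x => ∃ i, IsNearFace n (x i))) : ℝ) ≤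
      d * (2 * (3 ^ (d * m) / 3 ^ n) * P) := by
  calc (#(W.filter (fun x => ∃ i, IsNearFace n (x i))) : ℝ)
      ≤ #(univ.biUnion fun i => W.filter (fun x => IsNearFace n (x i))) := by
        refine Nat.cast_le.mpr (card_le_card fun x hx => ?_)
        obtain ⟨hxW, i, hi⟩ := mem_filter.mp hx
        exact mem_biUnion.mpr ⟨i, mem_univ _, mem_filter.mpr ⟨hxW, hi⟩⟩
    _ ≤ ∑ i, (#(W.filter (fun x => IsNearFace n (x i))) : ℝ) := by
        exact_mod_cast card_biUnion_le
    _ ≤ ∑ _i : Fin d, 2 * (3 ^ (d * m) / 3 ^ n) * P :=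
        sum_le_sum fun i _ => card_filter_isNearFace_le hP hnm hW i
    _ = d * (2 * (3 ^ (d * m) / 3 ^ n) * P) := by simp

lemma dirichletEnergy_glued_le (hln : l ≤ n) (hnm : n ≤ m) (hW : ∀ x ∈ W, x ∈ triCube d m 0)
    (hP : UnitCubeBounded W P) (p : EuclideanSpace ℝ (Fin d))
    (u : (Fin d → ℤ) → EuclideanSpace ℝ (Fin d) → ℝ)
    (hu : ∀ a, ∀ x ∈ W, x ∈ thickBdry d l n (cubeCenter n a) → u a x = ∑ i, p i * x i) :
    dirichletEnergy W (fun x => u (cubeIndex n x) x) ≤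
      ∑ a ∈ subcubeIndices d (m - n),
          dirichletEnergy (W.filter (· ∈ triCube d n (cubeCenter n a))) (u a) +
        d * 2 ^ d * P ^ 2 * ‖p‖ ^ 2 * (3 ^ (d * m) / 3 ^ n) := by
  have hP0 : 0 ≤ P := (Nat.cast_nonneg _).trans (hP 0)
  have hcross : ∀ x ∈ W, ∀ y ∈ W, dist x y ≤ 1 → cubeIndex n x ≠ cubeIndex n y →
      u (cubeIndex n x) x = ∑ i, p i * x i :=
    fun x hx y _ hxy hne => hu _ x hx
      (mem_thickBdry_of_isNearFace hln (exists_isNearFace_of_cubeIndex_ne hxy hne))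
  have hK := (sum_crossing_le W (cubeIndex n)
    (fun x y => (1 / 2) * (u (cubeIndex n x) x - u (cubeIndex n y) y) ^ 2)
    (fun x => ∃ i, IsNearFace n (x i)) (c := ‖p‖ ^ 2 / 2) (by positivity)
    (fun x _ y _ hxy hne => exists_isNearFace_of_cubeIndex_ne hxy hne)
    (fun x hx y hy hxy hne => by
      rw [hcross x hx y hy hxy hne, hcross y hy x hx (dist_comm x y ▸ hxy) hne.symm]
      linarith [sq_sum_mul_sub_sum_mul_le p x y hxy])
    (fun x _ => card_filter_dist_le hP x)).trans
    (mul_le_mul_of_nonneg_right (card_filter_exists_isNearFace_le hP hnm hW) (by positivity))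
  rw [dirichletEnergy_glue W (fun x hx => cubeIndex_mem_subcubeIndices hnm (hW x hx))
    (fun a _ => filter_congr fun _ _ => mem_triCube_cubeCenter_iff) u]
  linarith

theorem sInf_cubeEnergies_le (hln : l ≤ n) (hnm : n ≤ m)
    (hW : (↑W : Set (EuclideanSpace ℝ (Fin d))) ⊆ triCube d m 0) (hP : UnitCubeBounded W P)
    (p : EuclideanSpace ℝ (Fin d)) :
    sInf (cubeEnergies d W l m 0 p) ≤
      ∑ a ∈ subcubeIndices d (m - n), sInf (cubeEnergies d W l n (cubeCenter n a) p) +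
        d * 2 ^ d * P ^ 2 * ‖p‖ ^ 2 * (3 ^ (d * m) / 3 ^ n) := by
  have hWm : ∀ x ∈ W, x ∈ triCube d m 0 := fun x hx => hW hx
  rw [← sub_le_iff_le_add]
  refine le_sum_sInf _ (S := fun a => cubeEnergies d W l n (cubeCenter n a) p)
    (fun a => ⟨_, _, fun _ _ _ => rfl, rfl⟩) fun e he => ?_
  choose u hu he using he
  have hglued : dirichletEnergy W (fun x => u (cubeIndex n x) x) ∈ cubeEnergies d W l m 0 p := by
    refine ⟨_, fun x hx hb => hu _ x hx ?_, by rw [filter_true_of_mem hWm]; rfl⟩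
    exact mem_thickBdry_of_mem_thickBdry_zero hln hnm (hWm x hx) hb
  have hle := csInf_le ⟨0, by rintro _ ⟨v, -, rfl⟩; exact dirichletEnergy_nonneg _ v⟩ hglued
  have hsub : ∑ a ∈ subcubeIndices d (m - n),
      dirichletEnergy (W.filter (· ∈ triCube d n (cubeCenter n a))) (u a) =
        ∑ a ∈ subcubeIndices d (m - n), e a :=
    sum_congr rfl fun a _ => (he a).symm
  linarith [dirichletEnergy_glued_le hln hnm hWm hP p u hu]

end PointSet

end Cubes

end Subadditivity

open Subadditivity in
/-- Approximate subadditivity of the Dirichlet quantity (Lemma 3.7, inequality (3.2)). -/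
theorem approximate_subadditivity (d : ℕ) (hd : 2 ≤ d) :
    ∃ C : ℝ, 0 < C ∧
      ∀ l n m : ℕ, l < n → n < m →
      ∀ W : Finset (EuclideanSpace ℝ (Fin d)),
        (↑W : Set (EuclideanSpace ℝ (Fin d))) ⊆ triCube d m 0 →
      ∀ P : ℝ, (∀ z : EuclideanSpace ℝ (Fin d),
          ((W.filter (fun x => ∀ i, z i ≤ x i ∧ x i ≤ z i + 1)).card : ℝ) ≤ P) →
      ∀ p : EuclideanSpace ℝ (Fin d),
        muCG d W l m 0 p
          ≤ ((3 : ℝ) ^ (d * (m - n)))⁻¹ *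
              ∑ a ∈ Fintype.piFinset (fun _ : Fin d =>
                  Finset.Icc (-(((3 : ℤ) ^ (m - n) - 1) / 2)) (((3 : ℤ) ^ (m - n) - 1) / 2)),
                muCG d W l n (WithLp.toLp 2 (fun i => (3 : ℝ) ^ n * (a i : ℝ))) p
            + C * P ^ 2 * ‖p‖ ^ 2 * ((3 : ℝ) ^ (n - l))⁻¹ := by
  have hd0 : (0 : ℝ) < d := by exact_mod_cast (by omega : 0 < d)
  refine ⟨d * 2 ^ d, by positivity, fun l n m hln hnm W hW P hP p => ?_⟩
  have hdm : (3 : ℝ) ^ (d * m) = 3 ^ (d * (m - n)) * 3 ^ (d * n) := by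
    rw [← pow_add, ← mul_add, Nat.sub_add_cancel hnm.le]
  have hnl : ((3 : ℝ) ^ n)⁻¹ ≤ ((3 : ℝ) ^ (n - l))⁻¹ :=
    inv_anti₀ (by positivity) (pow_le_pow_right₀ (by norm_num) (Nat.sub_le n l))
  calc muCG d W l m 0 p
      ≤ ((3 : ℝ) ^ (d * m))⁻¹ * (∑ a ∈ subcubeIndices d (m - n),
          sInf (cubeEnergies d W l n (cubeCenter n a) p) +
            d * 2 ^ d * P ^ 2 * ‖p‖ ^ 2 * (3 ^ (d * m) / 3 ^ n)) :=
        mul_le_mul_of_nonneg_left (sInf_cubeEnergies_le hln.le hnm.le hW hP p) (by positivity)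
    _ = ((3 : ℝ) ^ (d * (m - n)))⁻¹ * ∑ a ∈ subcubeIndices d (m - n),
          muCG d W l n (cubeCenter n a) p + d * 2 ^ d * P ^ 2 * ‖p‖ ^ 2 * ((3 : ℝ) ^ n)⁻¹ := by
        simp only [muCG, ← Finset.mul_sum]
        rw [hdm]
        field_simp
    _ ≤ _ := by gcongr; exact le_rfl
end
end

section
/- Let u : W → ℝ be graph-harmonic on W and let ρ : ℝ^d → [0, ∞) be any nonnegative function. Then Σ_{x∈W} Σ_{y∈W, y~x} ((ρ(x)² + ρ(y)²)/4)·(u(x) − u(y))² ≤ Σ_{x∈W} Σ_{y∈W, y~x} (ρ(x) − ρ(y))²·(u(x) + u(y))². -/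
/-! Test the harmonic equation with `ρ² u` and symmetrize over edges: the resulting identity
`Σ ρ(x)² u(x) (u(y) - u(x)) = 0` can be added to the left-hand side edge by edge, and then each
edge term is dominated by `(ρ(x) - ρ(y))² (u(x) + u(y))²`, the difference being a sum of squares. -/

namespace Finset

variable {α M : Type*} (r : α → α → Prop) [DecidableRel r] (W : Finset α)

theorem sum_sum_filter_comm_of_symm [AddCommMonoid M] [Std.Symm r] (f : α → α → M) :
    ∑ x ∈ W, ∑ y ∈ W.filter (r x), f y x = ∑ x ∈ W, ∑ y ∈ W.filter (r x), f x y :=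
  sum_comm' fun x y => by
    simp only [mem_filter]
    exact ⟨fun ⟨hx, hy, hxy⟩ => ⟨⟨hx, symm hxy⟩, hy⟩,
      fun ⟨⟨hx, hyx⟩, hy⟩ => ⟨hx, hy, symm hyx⟩⟩

theorem sum_sum_filter_mul_sub_eq_zero [NonUnitalNonAssocRing M] {u : α → M}
    (hu : ∀ x ∈ W, ∑ y ∈ W.filter (r x), (u y - u x) = 0) (g : α → M) :
    ∑ x ∈ W, ∑ y ∈ W.filter (r x), g x * (u y - u x) = 0 :=
  sum_eq_zero fun x hx => by rw [← mul_sum, hu x hx, mul_zero]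

end Finset

/- `8 (rhs - lhs) = ((a + b)(s - t) + 2(a - b)(s + t))² + 4((a - b)(s + t))² + ((a - b)(s - t))²`. -/
theorem cutoff_inequality_pointwise (a b s t : ℝ) :
    (a ^ 2 + b ^ 2) / 4 * (s - t) ^ 2 + (a ^ 2 * s * (t - s) + b ^ 2 * t * (s - t))
      ≤ (a - b) ^ 2 * (s + t) ^ 2 := by
  nlinarith [sq_nonneg ((a + b) * (s - t) + 2 * (a - b) * (s + t)),
    sq_nonneg ((a - b) * (s + t)), sq_nonneg ((a - b) * (s - t))]

theorem cutoff_inequality_general (d : ℕ)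
    (W : Finset (EuclideanSpace ℝ (Fin d)))
    (u : EuclideanSpace ℝ (Fin d) → ℝ)
    (hu : ∀ x ∈ W, ∑ y ∈ W.filter (fun y => y ≠ x ∧ dist x y ≤ 1), (u y - u x) = 0)
    (ρ : EuclideanSpace ℝ (Fin d) → ℝ) :
    ∑ x ∈ W, ∑ y ∈ W.filter (fun y => y ≠ x ∧ dist x y ≤ 1),
        ((ρ x ^ 2 + ρ y ^ 2) / 4) * (u x - u y) ^ 2
      ≤ ∑ x ∈ W, ∑ y ∈ W.filter (fun y => y ≠ x ∧ dist x y ≤ 1),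
          (ρ x - ρ y) ^ 2 * (u x + u y) ^ 2 := by
  have : Std.Symm fun x y : EuclideanSpace ℝ (Fin d) => y ≠ x ∧ dist x y ≤ 1 :=
    ⟨fun _ _ ⟨hne, hxy⟩ => ⟨hne.symm, by rwa [dist_comm]⟩⟩
  have htest : ∑ x ∈ W, ∑ y ∈ W.filter (fun y => y ≠ x ∧ dist x y ≤ 1),
      ρ x ^ 2 * u x * (u y - u x) = 0 :=
    Finset.sum_sum_filter_mul_sub_eq_zero _ W hu fun x => ρ x ^ 2 * u x
  have htest_swap : ∑ x ∈ W, ∑ y ∈ W.filter (fun y => y ≠ x ∧ dist x y ≤ 1),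
      ρ y ^ 2 * u y * (u x - u y) = 0 := by
    rw [Finset.sum_sum_filter_comm_of_symm _ W fun x y => ρ x ^ 2 * u x * (u y - u x), htest]
  calc _ = ∑ x ∈ W, ∑ y ∈ W.filter (fun y => y ≠ x ∧ dist x y ≤ 1),
        ((ρ x ^ 2 + ρ y ^ 2) / 4 * (u x - u y) ^ 2
          + (ρ x ^ 2 * u x * (u y - u x) + ρ y ^ 2 * u y * (u x - u y))) := by
        simp only [Finset.sum_add_distrib, htest, htest_swap, add_zero]
    _ ≤ _ := Finset.sum_le_sum fun x _ => Finset.sum_le_sum fun y _ =>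
        cutoff_inequality_pointwise _ _ _ _

/-- Cutoff inequality at the heart of the discrete Caccioppoli estimate: if `u` is
graph-harmonic on `W` and `ρ ≥ 0`, then
`Σ_{x}Σ_{y~x} ((ρ(x)² + ρ(y)²)/4)(u(x)−u(y))² ≤ Σ_{x}Σ_{y~x} (ρ(x)−ρ(y))²(u(x)+u(y))²`. -/
theorem cutoff_inequality (d : ℕ) (hd : 2 ≤ d)
    (W : Finset (EuclideanSpace ℝ (Fin d)))
    (u : EuclideanSpace ℝ (Fin d) → ℝ)
    (hu : ∀ x ∈ W, ∑ y ∈ W.filter (fun y => y ≠ x ∧ dist x y ≤ 1), (u y - u x) = 0)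
    (ρ : EuclideanSpace ℝ (Fin d) → ℝ) (hρ : ∀ x, 0 ≤ ρ x) :
    ∑ x ∈ W, ∑ y ∈ W.filter (fun y => y ≠ x ∧ dist x y ≤ 1),
        ((ρ x ^ 2 + ρ y ^ 2) / 4) * (u x - u y) ^ 2
      ≤ ∑ x ∈ W, ∑ y ∈ W.filter (fun y => y ≠ x ∧ dist x y ≤ 1),
          (ρ x - ρ y) ^ 2 * (u x + u y) ^ 2 :=
  cutoff_inequality_general d W u hu ρ
end

section
/- There is a constant C depending only on d with the following property. Let u : W → ℝ be graph-harmonic on W and assume every x ∈ W has at most D neighbors in W. Let Q ⊆ ℝ^d be a cube of side length r > 0 and let Q* be the concentric cube of side length 3r. Then for every k ∈ ℝ, Σ_{x∈W∩Q} Σ_{y∈W∩Q, y~x} (u(x) − u(y))² ≤ (C·D/r²)·Σ_{x∈W, dist(x, Q*) ≤ 1} (u(x) − k)². -/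
/-!
Take the cutoff `η = max (1 - dist(·, Q) / r) 0`, which is `1` on `Q`, `1/r`-Lipschitz and
supported in the open `r`-neighbourhood of `Q`, hence in `Q*`. Testing harmonicity of `u - k`
against `η² (u - k)` and absorbing via AM–GM bounds the energy of `u` in `Q` by
`4 ∑ₓ ∑_{y ~ x} (η x - η y)² (u x - k)²`. Each term is at most `(u x - k)² / r²`, there are at
most `D` of them per `x`, and they vanish unless `x` lies within distance `1` of `Q*`.
-/

attribute [local instance] Classical.propDecidable

open Finset Metric

namespace SimpleGraph

variable {α : Type*} (G : SimpleGraph α) [DecidableRel G.Adj]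

def IsHarmonicOn (W : Finset α) (u : α → ℝ) : Prop :=
  ∀ x ∈ W, ∑ y ∈ W.filter (G.Adj x), (u y - u x) = 0

variable {G} {W : Finset α} {u : α → ℝ}

theorem sum_sum_filter_adj_comm (F : α → α → ℝ) :
    ∑ x ∈ W, ∑ y ∈ W.filter (G.Adj x), F x y = ∑ x ∈ W, ∑ y ∈ W.filter (G.Adj x), F y x :=
  sum_comm' fun x y => by
    simp only [mem_filter, G.adj_comm y x]
    tauto

namespace IsHarmonicOn

theorem sub_const (hu : G.IsHarmonicOn W u) (k : ℝ) : G.IsHarmonicOn W (fun x => u x - k) := by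
  intro x hx
  simpa only [sub_sub_sub_cancel_right] using hu x hx

theorem sum_sum_mul_sub_eq_zero (hu : G.IsHarmonicOn W u) (g : α → ℝ) :
    ∑ x ∈ W, ∑ y ∈ W.filter (G.Adj x), g x * (u x - u y) = 0 :=
  sum_eq_zero fun x hx => by
    rw [← mul_sum, ← neg_eq_zero, ← mul_neg, ← sum_neg_distrib]
    simp only [neg_sub, hu x hx, mul_zero]

theorem sum_sum_mul_sub_eq_zero' (hu : G.IsHarmonicOn W u) (g : α → ℝ) :
    ∑ x ∈ W, ∑ y ∈ W.filter (G.Adj x), g y * (u x - u y) = 0 := by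
  rw [sum_sum_filter_adj_comm]
  exact sum_eq_zero fun x hx => by rw [← mul_sum, hu x hx, mul_zero]

/-- Harmonicity tested against `η ^ 2 * u` at both endpoints of every edge. -/
theorem sum_sum_sq_mul_sq_sub_eq (hu : G.IsHarmonicOn W u) (η : α → ℝ) :
    ∑ x ∈ W, ∑ y ∈ W.filter (G.Adj x), η x ^ 2 * (u x - u y) ^ 2 =
      -∑ x ∈ W, ∑ y ∈ W.filter (G.Adj x), (η x ^ 2 - η y ^ 2) * u y * (u x - u y) := by
  have h₁ := hu.sum_sum_mul_sub_eq_zero (fun x => η x ^ 2 * u x)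
  have h₂ := hu.sum_sum_mul_sub_eq_zero' (fun y => η y ^ 2 * u y)
  have h : ∑ x ∈ W, ∑ y ∈ W.filter (G.Adj x), η x ^ 2 * (u x - u y) ^ 2 +
      ∑ x ∈ W, ∑ y ∈ W.filter (G.Adj x), (η x ^ 2 - η y ^ 2) * u y * (u x - u y) =
      ∑ x ∈ W, ∑ y ∈ W.filter (G.Adj x), η x ^ 2 * u x * (u x - u y) -
        ∑ x ∈ W, ∑ y ∈ W.filter (G.Adj x), η y ^ 2 * u y * (u x - u y) := by
    simp only [← sum_add_distrib, ← sum_sub_distrib]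
    exact sum_congr rfl fun x _ => sum_congr rfl fun y _ => by ring
  linarith

/-- The cutoff-function inequality. By AM–GM the right-hand side of
`sum_sum_sq_mul_sq_sub_eq` is at most half the left-hand side plus twice the variation term;
absorbing the first gives the constant `4`. -/
theorem sum_sum_sq_mul_sq_sub_le (hu : G.IsHarmonicOn W u) (η : α → ℝ) :
    ∑ x ∈ W, ∑ y ∈ W.filter (G.Adj x), η x ^ 2 * (u x - u y) ^ 2 ≤
      4 * ∑ x ∈ W, ∑ y ∈ W.filter (G.Adj x), (η x - η y) ^ 2 * u x ^ 2 := by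
  have hsymm : ∑ x ∈ W, ∑ y ∈ W.filter (G.Adj x), (η x ^ 2 + η y ^ 2) * (u x - u y) ^ 2 =
      2 * ∑ x ∈ W, ∑ y ∈ W.filter (G.Adj x), η x ^ 2 * (u x - u y) ^ 2 := by
    rw [two_mul]
    simp only [add_mul, sum_add_distrib, add_right_inj]
    rw [sum_sum_filter_adj_comm]
    exact sum_congr rfl fun x _ => sum_congr rfl fun y _ => by ring
  have hswap : ∑ x ∈ W, ∑ y ∈ W.filter (G.Adj x), (η x - η y) ^ 2 * u y ^ 2 =
      ∑ x ∈ W, ∑ y ∈ W.filter (G.Adj x), (η x - η y) ^ 2 * u x ^ 2 := by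
    rw [sum_sum_filter_adj_comm]
    exact sum_congr rfl fun x _ => sum_congr rfl fun y _ => by ring
  have hamgm := calc
    ∑ x ∈ W, ∑ y ∈ W.filter (G.Adj x), η x ^ 2 * (u x - u y) ^ 2
      = ∑ x ∈ W, ∑ y ∈ W.filter (G.Adj x), -((η x ^ 2 - η y ^ 2) * u y * (u x - u y)) := by
        simp only [sum_neg_distrib, hu.sum_sum_sq_mul_sq_sub_eq]
    _ ≤ ∑ x ∈ W, ∑ y ∈ W.filter (G.Adj x),
          ((η x ^ 2 + η y ^ 2) * (u x - u y) ^ 2 / 4 + 2 * ((η x - η y) ^ 2 * u y ^ 2)) := by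
        gcongr with x _ y _
        nlinarith [sq_nonneg ((η x + η y) * (u x - u y) + 4 * (η x - η y) * u y),
          sq_nonneg ((η x - η y) * (u x - u y))]
    _ = (∑ x ∈ W, ∑ y ∈ W.filter (G.Adj x), (η x ^ 2 + η y ^ 2) * (u x - u y) ^ 2) / 4 +
          2 * ∑ x ∈ W, ∑ y ∈ W.filter (G.Adj x), (η x - η y) ^ 2 * u y ^ 2 := by
        simp only [sum_add_distrib, sum_div, mul_sum]
  linarith

end IsHarmonicOn

theorem sum_sum_sq_sub_le_of_subset {V : Finset α} (hVW : V ⊆ W) {η : α → ℝ}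
    (hη : ∀ x ∈ V, η x = 1) (u : α → ℝ) :
    ∑ x ∈ V, ∑ y ∈ V.filter (G.Adj x), (u x - u y) ^ 2 ≤
      ∑ x ∈ W, ∑ y ∈ W.filter (G.Adj x), η x ^ 2 * (u x - u y) ^ 2 := calc
  _ = ∑ x ∈ V, ∑ y ∈ V.filter (G.Adj x), η x ^ 2 * (u x - u y) ^ 2 :=
    sum_congr rfl fun x hx => by simp only [hη x hx, one_pow, one_mul]
  _ ≤ ∑ x ∈ W, ∑ y ∈ W.filter (G.Adj x), η x ^ 2 * (u x - u y) ^ 2 := by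
    refine (sum_le_sum fun x _ => ?_).trans
      (sum_le_sum_of_subset_of_nonneg hVW fun x _ _ => sum_nonneg fun y _ => by positivity)
    exact sum_le_sum_of_subset_of_nonneg (filter_subset_filter _ hVW) fun y _ _ => by positivity

end SimpleGraph

def unitDistGraph (α : Type*) [PseudoMetricSpace α] : SimpleGraph α where
  Adj x y := x ≠ y ∧ dist x y ≤ 1
  symm := ⟨fun x y h => ⟨h.1.symm, dist_comm x y ▸ h.2⟩⟩

@[simp]
theorem unitDistGraph_adj {α : Type*} [PseudoMetricSpace α] {x y : α} :
    (unitDistGraph α).Adj x y ↔ x ≠ y ∧ dist x y ≤ 1 :=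
  Iff.rfl

section Cutoff

variable {α : Type*} [PseudoMetricSpace α] {Q : Set α} {r : ℝ} {x y : α}

noncomputable def infDistCutoff (Q : Set α) (r : ℝ) (x : α) : ℝ :=
  max (1 - infDist x Q / r) 0

theorem infDistCutoff_eq_one_of_mem (h : x ∈ Q) : infDistCutoff Q r x = 1 := by
  simp [infDistCutoff, infDist_zero_of_mem h]

theorem infDist_lt_of_infDistCutoff_ne_zero (hr : 0 < r) (h : infDistCutoff Q r x ≠ 0) :
    infDist x Q < r := by
  by_contra! hle
  exact h (max_eq_right (by rw [sub_nonpos, one_le_div hr]; exact hle))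

theorem abs_infDistCutoff_sub_le (hr : 0 < r) :
    |infDistCutoff Q r x - infDistCutoff Q r y| ≤ dist x y / r := calc
  _ ≤ |(1 - infDist x Q / r) - (1 - infDist y Q / r)| := abs_max_sub_max_le_abs _ _ _
  _ = |infDist x Q - infDist y Q| / r := by
        rw [sub_sub_sub_cancel_left, ← sub_div, abs_div, abs_of_pos hr, abs_sub_comm]
  _ ≤ dist x y / r := by
        gcongr
        simpa [Real.dist_eq] using (lipschitz_infDist_pt Q).dist_le_mul x y

end Cutoff

section Caccioppoli

variable {α : Type*} [PseudoMetricSpace α] {G : SimpleGraph α} [DecidableRel G.Adj]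
  {W : Finset α} {D : ℕ} {Q Q' : Set α} {r : ℝ}

theorem infDistCutoff_eq_zero_of_dist_le (hr : 0 < r) (hQ : ∀ x, infDist x Q < r → x ∈ Q')
    {x z : α} (hx : 1 < infDist x Q') (hxz : dist x z ≤ 1) : infDistCutoff Q r z = 0 := by
  by_contra h
  have hz : infDist z Q' = 0 := infDist_zero_of_mem (hQ z (infDist_lt_of_infDistCutoff_ne_zero hr h))
  linarith [infDist_le_infDist_add_dist (x := x) (y := z) (s := Q')]

theorem sum_sum_sq_sub_infDistCutoff_mul_le (hG : G ≤ unitDistGraph α)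
    (hdeg : ∀ x ∈ W, #(W.filter (G.Adj x)) ≤ D) (hr : 0 < r)
    (hQ : ∀ x, infDist x Q < r → x ∈ Q') (v : α → ℝ) :
    ∑ x ∈ W, ∑ y ∈ W.filter (G.Adj x), (infDistCutoff Q r x - infDistCutoff Q r y) ^ 2 * v x ^ 2 ≤
      D / r ^ 2 * ∑ x ∈ W.filter (fun x => infDist x Q' ≤ 1), v x ^ 2 := by
  rw [sum_filter, mul_sum]
  refine sum_le_sum fun x hx => ?_
  split_ifs with hxQ'
  · calc
      _ ≤ ∑ y ∈ W.filter (G.Adj x), 1 / r ^ 2 * v x ^ 2 := by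
        refine sum_le_sum fun y hy => ?_
        gcongr
        calc
          _ ≤ (dist x y / r) ^ 2 := by
            rw [← sq_abs]
            gcongr
            exact abs_infDistCutoff_sub_le hr
          _ ≤ 1 / r ^ 2 := by
            rw [div_pow]
            gcongr
            exact pow_le_one₀ dist_nonneg (hG (mem_filter.mp hy).2).2
      _ ≤ D / r ^ 2 * v x ^ 2 := by
        rw [sum_const, nsmul_eq_mul, ← mul_assoc, mul_one_div]
        gcongr
        exact_mod_cast hdeg x hx
  · rw [not_le] at hxQ'
    rw [mul_zero]
    refine le_of_eq (sum_eq_zero fun y hy => ?_)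
    rw [infDistCutoff_eq_zero_of_dist_le hr hQ hxQ' (by simp),
      infDistCutoff_eq_zero_of_dist_le hr hQ hxQ' (hG (mem_filter.mp hy).2).2]
    ring

theorem caccioppoli_of_infDist_lt {u : α → ℝ} (hG : G ≤ unitDistGraph α)
    (hu : G.IsHarmonicOn W u) (hdeg : ∀ x ∈ W, #(W.filter (G.Adj x)) ≤ D) (hr : 0 < r)
    (hQ : ∀ x, infDist x Q < r → x ∈ Q') (k : ℝ) :
    ∑ x ∈ W.filter (· ∈ Q), ∑ y ∈ (W.filter (· ∈ Q)).filter (G.Adj x), (u x - u y) ^ 2 ≤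
      4 * D / r ^ 2 * ∑ x ∈ W.filter (fun x => infDist x Q' ≤ 1), (u x - k) ^ 2 := by
  set η := infDistCutoff Q r
  calc
    _ ≤ ∑ x ∈ W, ∑ y ∈ W.filter (G.Adj x), η x ^ 2 * (u x - u y) ^ 2 :=
      SimpleGraph.sum_sum_sq_sub_le_of_subset (filter_subset _ W)
        (fun x hx => infDistCutoff_eq_one_of_mem (mem_filter.mp hx).2) u
    _ ≤ 4 * ∑ x ∈ W, ∑ y ∈ W.filter (G.Adj x), (η x - η y) ^ 2 * (u x - k) ^ 2 := by
      simpa only [sub_sub_sub_cancel_right] using (hu.sub_const k).sum_sum_sq_mul_sq_sub_le η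
    _ ≤ 4 * (D / r ^ 2 * ∑ x ∈ W.filter (fun x => infDist x Q' ≤ 1), (u x - k) ^ 2) := by
      gcongr
      exact sum_sum_sq_sub_infDistCutoff_mul_le hG hdeg hr hQ _
    _ = _ := by ring

end Caccioppoli

theorem abs_sub_le_of_infDist_lt {ι : Type*} [Fintype ι] {p : ENNReal} [Fact (1 ≤ p)]
    {c x : PiLp p (fun _ : ι => ℝ)} {a s : ℝ} (ha : 0 ≤ a)
    (hx : infDist x {y | ∀ i, |y i - c i| ≤ a} < s) (i : ι) : |x i - c i| ≤ a + s := by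
  obtain ⟨y, hy, hxy⟩ := (infDist_lt_iff ⟨c, fun i => by simpa using ha⟩).mp hx
  calc
    |x i - c i| ≤ |x i - y i| + |y i - c i| := abs_sub_le _ _ _
    _ ≤ s + a := add_le_add ((PiLp.dist_apply_le x y i).trans hxy.le) (hy i)
    _ = a + s := add_comm _ _

theorem caccioppoli_general (d : ℕ) :
    ∃ C : ℝ, 0 < C ∧
      ∀ (W : Finset (EuclideanSpace ℝ (Fin d))) (u : EuclideanSpace ℝ (Fin d) → ℝ)
        (D : ℕ) (c : EuclideanSpace ℝ (Fin d)) (r : ℝ) (k : ℝ),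
        (∀ x ∈ W, ∑ y ∈ W.filter (fun y => y ≠ x ∧ dist x y ≤ 1), (u y - u x) = 0) →
        (∀ x ∈ W, (W.filter (fun y => y ≠ x ∧ dist x y ≤ 1)).card ≤ D) →
        0 < r →
        ∑ x ∈ W.filter (fun x => ∀ i, |x i - c i| ≤ r / 2),
            ∑ y ∈ (W.filter (fun x => ∀ i, |x i - c i| ≤ r / 2)).filter
                (fun y => y ≠ x ∧ dist x y ≤ 1),
              (u x - u y) ^ 2
          ≤ (C * D / r ^ 2) *
              ∑ x ∈ W.filter (fun x =>
                  Metric.infDist x {y : EuclideanSpace ℝ (Fin d) | ∀ i, |y i - c i| ≤ 3 * r / 2} ≤ 1),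
                (u x - k) ^ 2 := by
  refine ⟨4, four_pos, fun W u D c r k hu hdeg hr => ?_⟩
  have hQ (x) (hx : infDist x {y | ∀ i, |y i - c i| ≤ r / 2} < r) :
      x ∈ {y : EuclideanSpace ℝ (Fin d) | ∀ i, |y i - c i| ≤ 3 * r / 2} := fun i => by
    linarith [abs_sub_le_of_infDist_lt (by positivity) hx i]
  have hadj (x) : (unitDistGraph (EuclideanSpace ℝ (Fin d))).Adj x = fun y => y ≠ x ∧ dist x y ≤ 1 :=
    funext fun y => propext (unitDistGraph_adj.trans (and_congr_left' ne_comm))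
  simp only [← hadj] at hu hdeg ⊢
  simpa only [Set.mem_ofPred_eq] using
    caccioppoli_of_infDist_lt le_rfl hu hdeg hr hQ k

/-- Caccioppoli inequality for graph-harmonic functions (Lemma 4.1): there is a
constant `C = C(d)` such that for any graph-harmonic `u` on `W` with neighbor count
bounded by `D`, any cube `Q` of side `r` (with concentric triple `Q*`) and any `k ∈ ℝ`,
the energy of `u` in `Q` is bounded by `(C·D/r²)` times the squared `L²` norm of `u − k`
on the 1-neighborhood of `Q*`. -/
theorem caccioppoli (d : ℕ) (hd : 2 ≤ d) :
    ∃ C : ℝ, 0 < C ∧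
      ∀ (W : Finset (EuclideanSpace ℝ (Fin d))) (u : EuclideanSpace ℝ (Fin d) → ℝ)
        (D : ℕ) (c : EuclideanSpace ℝ (Fin d)) (r : ℝ) (k : ℝ),
        (∀ x ∈ W, ∑ y ∈ W.filter (fun y => y ≠ x ∧ dist x y ≤ 1), (u y - u x) = 0) →
        (∀ x ∈ W, (W.filter (fun y => y ≠ x ∧ dist x y ≤ 1)).card ≤ D) →
        0 < r →
        ∑ x ∈ W.filter (fun x => ∀ i, |x i - c i| ≤ r / 2),
            ∑ y ∈ (W.filter (fun x => ∀ i, |x i - c i| ≤ r / 2)).filter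
                (fun y => y ≠ x ∧ dist x y ≤ 1),
              (u x - u y) ^ 2
          ≤ (C * D / r ^ 2) *
              ∑ x ∈ W.filter (fun x =>
                  Metric.infDist x {y : EuclideanSpace ℝ (Fin d) | ∀ i, |y i - c i| ≤ 3 * r / 2} ≤ 1),
                (u x - k) ^ 2 :=
  caccioppoli_general d
end

section
/- Let μ ∈ (0,1), α > 0, d ∈ ℕ, K ≥ 0, β ≥ 0 and l ∈ ℕ, and let (a_m)_{m≥l} be nonnegative real numbers satisfying a_l ≤ K and, for every m ≥ l, a_{m+1} ≤ μ·a_m + K·(3^{−α(m−l)} + β·3^{(m−l)d}). Then for every α₀ with 0 < α₀ < min(α, log(1/μ)/log 3) there exists a constant C depending only on μ, α, α₀ and d such that a_m ≤ C·K·(3^{−α₀(m−l)} + β·3^{(m−l)d}) for all m ≥ l. -/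
/-- Elementary iteration lemma (mechanism of Proposition 4.4): a nonnegative sequence
satisfying the damped recursion `a_{m+1} ≤ μ a_m + K (3^{−α(m−l)} + β 3^{(m−l)d})`
with `a_l ≤ K` decays like `3^{−α₀(m−l)}`, up to the `β`-error, for every
`α₀ < min(α, log(1/μ)/log 3)`, with a constant depending only on `μ, α, α₀, d`. -/
theorem iteration_lemma (μ α α₀ : ℝ) (d : ℕ)
    (hμ0 : 0 < μ) (hμ1 : μ < 1) (hα : 0 < α) (hα₀0 : 0 < α₀)
    (hα₀ : α₀ < min α (Real.log (1 / μ) / Real.log 3)) :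
    ∃ C : ℝ, 0 < C ∧
      ∀ (K β : ℝ) (l : ℕ) (a : ℕ → ℝ),
        0 ≤ K → 0 ≤ β →
        (∀ m, l ≤ m → 0 ≤ a m) →
        a l ≤ K →
        (∀ m, l ≤ m →
          a (m + 1) ≤ μ * a m +
            K * ((3 : ℝ) ^ (-(α * ((m : ℝ) - (l : ℝ)))) + β * (3 : ℝ) ^ ((m - l) * d))) →
        ∀ m, l ≤ m →
          a m ≤ C * K * ((3 : ℝ) ^ (-(α₀ * ((m : ℝ) - (l : ℝ)))) + β * (3 : ℝ) ^ ((m - l) * d)) := by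
  have h3 : (1 : ℝ) < 3 := by norm_num
  have hα₀α : α₀ < α := (lt_min_iff.mp hα₀).1
  set t : ℝ := (3 : ℝ) ^ (-α₀) with ht
  have ht0 : 0 < t := Real.rpow_pos_of_pos (by norm_num) _
  have ht1 : t < 1 := Real.rpow_lt_one_of_one_lt_of_neg h3 (by linarith)
  have hμt : μ < t := by
    have hlog3 : 0 < Real.log 3 := Real.log_pos h3
    have h1 : α₀ < Real.log (1 / μ) / Real.log 3 := (lt_min_iff.mp hα₀).2
    have h2 : α₀ * Real.log 3 < Real.log (1 / μ) := (lt_div_iff₀ hlog3).mp h1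
    rw [one_div, Real.log_inv] at h2
    have hlt : Real.log μ < Real.log t := by
      rw [ht, Real.log_rpow (by norm_num : (0:ℝ) < 3)]; linarith
    exact (Real.log_lt_log_iff hμ0 ht0).mp hlt
  set C : ℝ := max 1 (1 / (t - μ)) with hC
  have hC1 : (1 : ℝ) ≤ C := le_max_left _ _
  have hC0 : 0 < C := lt_of_lt_of_le one_pos hC1
  have hCkey : μ * C + 1 ≤ t * C := by
    have h1 : 1 / (t - μ) ≤ C := le_max_right _ _
    have h2 : (1 : ℝ) ≤ (t - μ) * C := by
      rw [div_le_iff₀ (by linarith)] at h1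
      nlinarith
    nlinarith
  refine ⟨C, hC0, ?_⟩
  intro K β l a hK hβ ha h0 hrec m hm
  induction m, hm using Nat.le_induction with
  | base =>
    simp only [Nat.sub_self, sub_self, mul_zero, neg_zero, Real.rpow_zero, Nat.zero_mul,
      pow_zero, mul_one]
    nlinarith [mul_nonneg (sub_nonneg.mpr hC1) hK, mul_nonneg (mul_nonneg hC0.le hK) hβ]
  | succ m hm IH =>
    have hn : (0 : ℝ) ≤ (m : ℝ) - l := by
      have := (Nat.cast_le (α := ℝ)).mpr hm
      linarith
    set X : ℝ := (3 : ℝ) ^ (-(α₀ * ((m : ℝ) - (l : ℝ)))) with hX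
    set Y : ℝ := (3 : ℝ) ^ ((m - l) * d) with hY
    have hX0 : 0 < X := Real.rpow_pos_of_pos (by norm_num) _
    have hY0 : (0 : ℝ) < Y := pow_pos (by norm_num) _
    have hXα : (3 : ℝ) ^ (-(α * ((m : ℝ) - (l : ℝ)))) ≤ X := by
      apply Real.rpow_le_rpow_of_exponent_le (le_of_lt h3)
      nlinarith
    have hX' : (3 : ℝ) ^ (-(α₀ * ((↑(m + 1) : ℝ) - (l : ℝ)))) = t * X := by
      rw [ht, hX, ← Real.rpow_add (by norm_num : (0:ℝ) < 3)]
      push_cast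
      ring_nf
    have hY' : Y ≤ (3 : ℝ) ^ ((m + 1 - l) * d) := by
      apply pow_le_pow_right₀ (le_of_lt h3)
      have : m - l ≤ m + 1 - l := by omega
      exact Nat.mul_le_mul_right d this
    have hrecm := hrec m hm
    have ham := ha m hm
    have step1 : a (m + 1) ≤ μ * a m + K * (X + β * Y) := by
      refine le_trans hrecm ?_
      have : K * ((3:ℝ) ^ (-(α * ((m : ℝ) - (l : ℝ)))) + β * Y) ≤ K * (X + β * Y) := by
        apply mul_le_mul_of_nonneg_left _ hK
        linarith
      linarith
    have step2 : μ * a m ≤ μ * (C * K * (X + β * Y)) :=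
      mul_le_mul_of_nonneg_left IH (le_of_lt hμ0)
    have hXY0 : 0 ≤ X + β * Y := by positivity
    have step3 : a (m + 1) ≤ (μ * C + 1) * K * (X + β * Y) := by nlinarith
    have step4 : (μ * C + 1) * K * (X + β * Y) ≤ t * C * K * (X + β * Y) := by
      apply mul_le_mul_of_nonneg_right _ hXY0
      exact mul_le_mul_of_nonneg_right hCkey hK
    have step5 : t * C * K * (X + β * Y) ≤
        C * K * ((3 : ℝ) ^ (-(α₀ * ((↑(m + 1) : ℝ) - (l : ℝ)))) + β * (3 : ℝ) ^ ((m + 1 - l) * d)) := by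
      rw [hX']
      have h1 : t * (β * Y) ≤ β * (3 : ℝ) ^ ((m + 1 - l) * d) := by
        have : t * (β * Y) ≤ 1 * (β * Y) := by
          apply mul_le_mul_of_nonneg_right (le_of_lt ht1) (by positivity)
        have h2 : β * Y ≤ β * (3 : ℝ) ^ ((m + 1 - l) * d) :=
          mul_le_mul_of_nonneg_left hY' hβ
        linarith
      have hCK : 0 ≤ C * K := mul_nonneg hC0.le hK
      have h2 : C * K * (t * (β * Y)) ≤ C * K * (β * (3 : ℝ) ^ ((m + 1 - l) * d)) :=
        mul_le_mul_of_nonneg_left h1 hCK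
      have heq : t * C * K * (X + β * Y) = C * K * (t * X) + C * K * (t * (β * Y)) := by ring
      have heq2 : C * K * (t * X + β * (3 : ℝ) ^ ((m + 1 - l) * d)) =
          C * K * (t * X) + C * K * (β * (3 : ℝ) ^ ((m + 1 - l) * d)) := by ring
      linarith
    linarith
end

section
/- Let ū : ℝ^d → ℝ be twice continuously differentiable with partial derivatives ∂_i ū and ∂_i∂_j ū, let φ₁, …, φ_d : W → ℝ, and let x ∈ W be a point such that for each i = 1, …, d the corrector equation Σ_{y∈W, y~x} (x_i − y_i + φ_i(x) − φ_i(y)) = 0 holds. Define u : W → ℝ by u(z) := ū(z) + Σ_{i=1}^d ∂_i ū(z)·φ_i(z). Then Σ_{y∈W, y~x} (u(x) − u(y)) equals the sum of the following four terms: (I) Σ_{i,j} (1/2)·∂_i∂_j ū(x) · Σ_{y~x} (x_j − y_j)·(x_i − y_i + φ_i(x) − φ_i(y)); (II) Σ_{y~x} Σ_i (1/2)·(∂_i ū(x) − ∂_i ū(y))·(φ_i(x) + φ_i(y)); (III) Σ_{y~x} ( ū(x) − ū(y) − Σ_i ∂_i ū(x)·(x_i − y_i) − Σ_{i,j} (1/2)·∂_i∂_j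 ū(x)·(x_i − y_i)(x_j − y_j) ); (IV) Σ_{y~x} Σ_i (1/2)·( ∂_i ū(y) − ∂_i ū(x) − Σ_j ∂_i∂_j ū(x)·(x_j − y_j) )·(φ_i(x) − φ_i(y)). -/
/-!
Write `u(z) = ū(z) + Σᵢ gᵢ(z) φᵢ(z)` with `gᵢ = ∂ᵢū`, `cᵢ(y) = xᵢ - yᵢ`, `Dᵢⱼ = ∂ⱼ∂ᵢū(x)` and
`sᵢ(y) = Σⱼ Dᵢⱼ cⱼ(y)`. For each neighbour `y`, the discrete product rule
`ab - a'b' = ½(a - a')(b + b') + ½(a + a')(b - b')` together with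
`½(gᵢ(x) + gᵢ(y)) = gᵢ(x) + ½ sᵢ(y) + ½(gᵢ(y) - gᵢ(x) - sᵢ(y))` splits `u(x) - u(y)` into
`Σᵢ (gᵢ(x) + ½ sᵢ(y)) (cᵢ(y) + φᵢ(x) - φᵢ(y))` plus the summands of (II)–(IV).
Summed over `y`, the `gᵢ(x)` part vanishes by the corrector equation and the `½ sᵢ` part is (I).
-/

attribute [local instance] Classical.propDecidable

noncomputable section

/-- The partial derivative `∂_i f` of a function on `ℝ^d`. -/
def pder (d : ℕ) (f : EuclideanSpace ℝ (Fin d) → ℝ) (i : Fin d)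
    (z : EuclideanSpace ℝ (Fin d)) : ℝ :=
  fderiv ℝ f z (EuclideanSpace.single i 1)

/-- The neighbors of `x` in `W`: points `y ∈ W`, `y ≠ x`, within Euclidean distance 1. -/
def nbrs (d : ℕ) (W : Finset (EuclideanSpace ℝ (Fin d))) (x : EuclideanSpace ℝ (Fin d)) :
    Finset (EuclideanSpace ℝ (Fin d)) :=
  W.filter (fun y => y ≠ x ∧ dist x y ≤ 1)

/-- The two-scale expansion `u := ū + Σ_i ∂_i ū · φ_i`. -/
def twoScale (d : ℕ) (ubar : EuclideanSpace ℝ (Fin d) → ℝ)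
    (φ : Fin d → EuclideanSpace ℝ (Fin d) → ℝ) (z : EuclideanSpace ℝ (Fin d)) : ℝ :=
  ubar z + ∑ i, pder d ubar i z * φ i z

section TwoScaleAlgebra

open Finset

variable {ι α : Type*} [Fintype ι]

theorem sum_mul_sub_sum_mul_eq_two_scale (g g' p p' c s : ι → ℝ) :
    ∑ i, g i * p i - ∑ i, g' i * p' i
      = ∑ i, g i * (c i + p i - p' i) + ∑ i, (1/2) * s i * (c i + p i - p' i)
        + ∑ i, (1/2) * (g i - g' i) * (p i + p' i) - ∑ i, g i * c i
        - ∑ i, (1/2) * c i * s i + ∑ i, (1/2) * (g' i - g i - s i) * (p i - p' i) := by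
  simp only [← sum_sub_distrib, ← sum_add_distrib]
  exact sum_congr rfl fun i _ => by ring

theorem twoScale_increment_eq (f : α → ℝ) (g : ι → α → ℝ) (D : ι → ι → ℝ)
    (c φ : ι → α → ℝ) (x y : α) :
    (f x + ∑ i, g i x * φ i x) - (f y + ∑ i, g i y * φ i y)
      = ∑ i, g i x * (c i y + φ i x - φ i y)
        + ∑ i, ∑ j, (1/2) * D i j * (c j y * (c i y + φ i x - φ i y))
        + ∑ i, (1/2) * (g i x - g i y) * (φ i x + φ i y)
        + (f x - f y - ∑ i, g i x * c i y - ∑ i, ∑ j, (1/2) * D i j * c i y * c j y)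
        + ∑ i, (1/2) * (g i y - g i x - ∑ j, D i j * c j y) * (φ i x - φ i y) := by
  have hessian_flux : ∀ i, ∑ j, (1/2) * D i j * (c j y * (c i y + φ i x - φ i y))
      = (1/2) * (∑ j, D i j * c j y) * (c i y + φ i x - φ i y) := fun i => by
    rw [mul_assoc, sum_mul, mul_sum]
    exact sum_congr rfl fun j _ => by ring
  have hessian_quadratic : ∀ i, ∑ j, (1/2) * D i j * c i y * c j y
      = (1/2) * c i y * ∑ j, D i j * c j y := fun i => by
    rw [mul_sum]
    exact sum_congr rfl fun j _ => by ring
  simp only [hessian_flux, hessian_quadratic]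
  linear_combination sum_mul_sub_sum_mul_eq_two_scale (g · x) (g · y) (φ · x) (φ · y) (c · y)
    (fun i => ∑ j, D i j * c j y)

theorem sum_twoScale_increment_eq (N : Finset α) (f : α → ℝ) (g : ι → α → ℝ)
    (D : ι → ι → ℝ) (c φ : ι → α → ℝ) (x : α)
    (hcorr : ∀ i, ∑ y ∈ N, (c i y + φ i x - φ i y) = 0) :
    ∑ y ∈ N, ((f x + ∑ i, g i x * φ i x) - (f y + ∑ i, g i y * φ i y))
      = (∑ i, ∑ j, (1/2) * D i j * ∑ y ∈ N, c j y * (c i y + φ i x - φ i y))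
        + (∑ y ∈ N, ∑ i, (1/2) * (g i x - g i y) * (φ i x + φ i y))
        + (∑ y ∈ N, (f x - f y - (∑ i, g i x * c i y)
              - ∑ i, ∑ j, (1/2) * D i j * c i y * c j y))
        + (∑ y ∈ N, ∑ i, (1/2) * (g i y - g i x - ∑ j, D i j * c j y) * (φ i x - φ i y)) := by
  have corrector_term : ∑ y ∈ N, ∑ i, g i x * (c i y + φ i x - φ i y) = 0 := by
    rw [sum_comm]
    simp only [← mul_sum, hcorr, mul_zero, sum_const_zero]
  have flux_term : ∑ y ∈ N, ∑ i, ∑ j, (1/2) * D i j * (c j y * (c i y + φ i x - φ i y))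
      = ∑ i, ∑ j, (1/2) * D i j * ∑ y ∈ N, c j y * (c i y + φ i x - φ i y) := by
    rw [sum_comm]
    simp only [mul_sum]
    exact sum_congr rfl fun i _ => sum_comm
  simp only [twoScale_increment_eq f g D c φ x, sum_add_distrib, corrector_term, flux_term,
    zero_add]

end TwoScaleAlgebra

theorem two_scale_expansion_identity_general (d : ℕ)
    (W : Finset (EuclideanSpace ℝ (Fin d)))
    (ubar : EuclideanSpace ℝ (Fin d) → ℝ)
    (φ : Fin d → EuclideanSpace ℝ (Fin d) → ℝ)
    (x : EuclideanSpace ℝ (Fin d))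
    (hcorr : ∀ i : Fin d, ∑ y ∈ nbrs d W x, (x i - y i + φ i x - φ i y) = 0) :
    ∑ y ∈ nbrs d W x, (twoScale d ubar φ x - twoScale d ubar φ y)
      = (∑ i, ∑ j, (1/2) * pder d (pder d ubar i) j x *
            ∑ y ∈ nbrs d W x, (x j - y j) * (x i - y i + φ i x - φ i y))
        + (∑ y ∈ nbrs d W x, ∑ i,
            (1/2) * (pder d ubar i x - pder d ubar i y) * (φ i x + φ i y))
        + (∑ y ∈ nbrs d W x,
            (ubar x - ubar y - (∑ i, pder d ubar i x * (x i - y i))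
              - ∑ i, ∑ j, (1/2) * pder d (pder d ubar i) j x * (x i - y i) * (x j - y j)))
        + (∑ y ∈ nbrs d W x, ∑ i,
            (1/2) * (pder d ubar i y - pder d ubar i x
                - ∑ j, pder d (pder d ubar i) j x * (x j - y j)) * (φ i x - φ i y)) := by
  simpa only [twoScale] using
    sum_twoScale_increment_eq (nbrs d W x) ubar (pder d ubar)
      (fun i j => pder d (pder d ubar i) j x) (fun i y => x i - y i) φ x hcorr

/-- The exact two-scale expansion identity (displays (5.3)–(5.5) in Lemma 5.2):
inserting the two-scale ansatz into the graph Laplacian at a point where the corrector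
equation holds yields the homogenized-flux main term plus three explicit remainders. -/
theorem two_scale_expansion_identity (d : ℕ) (hd : 2 ≤ d)
    (W : Finset (EuclideanSpace ℝ (Fin d)))
    (ubar : EuclideanSpace ℝ (Fin d) → ℝ) (hubar : ContDiff ℝ 2 ubar)
    (φ : Fin d → EuclideanSpace ℝ (Fin d) → ℝ)
    (x : EuclideanSpace ℝ (Fin d)) (hx : x ∈ W)
    (hcorr : ∀ i : Fin d, ∑ y ∈ nbrs d W x, (x i - y i + φ i x - φ i y) = 0) :
    ∑ y ∈ nbrs d W x, (twoScale d ubar φ x - twoScale d ubar φ y)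
      = (∑ i, ∑ j, (1/2) * pder d (pder d ubar i) j x *
            ∑ y ∈ nbrs d W x, (x j - y j) * (x i - y i + φ i x - φ i y))
        + (∑ y ∈ nbrs d W x, ∑ i,
            (1/2) * (pder d ubar i x - pder d ubar i y) * (φ i x + φ i y))
        + (∑ y ∈ nbrs d W x,
            (ubar x - ubar y - (∑ i, pder d ubar i x * (x i - y i))
              - ∑ i, ∑ j, (1/2) * pder d (pder d ubar i) j x * (x i - y i) * (x j - y j)))
        + (∑ y ∈ nbrs d W x, ∑ i,
            (1/2) * (pder d ubar i y - pder d ubar i x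
                - ∑ j, pder d (pder d ubar i) j x * (x j - y j)) * (φ i x - φ i y)) :=
  two_scale_expansion_identity_general d W ubar φ x hcorr
end
end
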